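/- (Proposition 9.) Suppose in addition that the density f is symmetric about its mean m, i.e. f(m + x) = f(m − x) for all x ∈ ℝ (so the median cost γ_μ equals m). Then the median voter receives a weakly higher payoff at the high reward r₁* = k₁(t)/ρ(δ,φ) than at the low reward r₀* = k₀(t)/ρ(δ,φ) — equivalently, m ≤ Θ(t) — if and only if m ≤ t. -/

import Mathlib

open MeasureTheory

/-- A cost distribution: a CDF `F` with continuously differentiable structure
given by a strictly positive, differentiable, log-concave density `f` with full
support on `ℝ`. -/
structure CostDist where
  F : ℝ → ℝ
  f : ℝ → ℝ
  deriv_eq : ∀ x : ℝ, HasDerivAt F (f x) x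
  f_pos : ∀ x : ℝ, 0 < f x
  f_diff : Differentiable ℝ f
  f_logConcave : ConcaveOn ℝ Set.univ fun x => Real.log (f x)
  tendsto_bot : Filter.Tendsto F Filter.atBot (nhds 0)
  tendsto_top : Filter.Tendsto F Filter.atTop (nhds 1)

/-- Expected responsiveness of the classifier `δ = (δ₁, δ₀)` at precision `φ`. -/
noncomputable def rho (d1 d0 phi : ℝ) : ℝ := (d1 + d0 - 1) * (2 * phi - 1)

/-- The designer's expected payoff `EU_D(δ | r)`. -/
noncomputable def EUD (D : CostDist) (phi A1 A0 B1 B0 r d1 d0 : ℝ) : ℝ :=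
  D.F (r * rho d1 d0 phi) *
      (phi * (A1 * d1 + A0 * (1 - d1)) + (1 - phi) * (A0 * d0 + A1 * (1 - d0))) +
    (1 - D.F (r * rho d1 d0 phi)) *
      (phi * (B1 * d0 + B0 * (1 - d0)) + (1 - phi) * (B0 * d1 + B1 * (1 - d1)))

/-- A voter's expected payoff conditional on complying, `EU₁(r | γ)`. -/
noncomputable def EU1 (D : CostDist) (phi t gamma d1 d0 r : ℝ) : ℝ :=
  -gamma + r * rho d1 d0 phi * (1 - D.F (r * rho d1 d0 phi)) + t * D.F (r * rho d1 d0 phi)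

/-- A voter's expected payoff conditional on not complying, `EU₀(r)`. -/
noncomputable def EU0 (D : CostDist) (phi t d1 d0 r : ℝ) : ℝ :=
  -(r * rho d1 d0 phi) * D.F (r * rho d1 d0 phi) + t * D.F (r * rho d1 d0 phi)

/-- A voter's overall payoff `V(r | γ) = max(EU₁(r | γ), EU₀(r))`. -/
noncomputable def V (D : CostDist) (phi t gamma d1 d0 r : ℝ) : ℝ :=
  max (EU1 D phi t gamma d1 d0 r) (EU0 D phi t d1 d0 r)

/-- Strict quasiconcavity of a real function on a set. -/
def StrictQuasiconcaveOn (s : Set ℝ) (g : ℝ → ℝ) : Prop :=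
  ∀ ⦃x⦄, x ∈ s → ∀ ⦃y⦄, y ∈ s → x ≠ y → ∀ ⦃a b : ℝ⦄, 0 < a → 0 < b → a + b = 1 →
    min (g x) (g y) < g (a * x + b * y)

/-- Strict quasiconvexity of a real function on a set. -/
def StrictQuasiconvexOn (s : Set ℝ) (g : ℝ → ℝ) : Prop :=
  ∀ ⦃x⦄, x ∈ s → ∀ ⦃y⦄, y ∈ s → x ≠ y → ∀ ⦃a b : ℝ⦄, 0 < a → 0 < b → a + b = 1 →
    g (a * x + b * y) < max (g x) (g y)

/-- `(r, δ)` is an equilibrium: `r` maximizes the median voter's payoff given `δ`,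
and `δ ∈ [0,1]²` maximizes the designer's payoff given `r`. -/
def IsEquilibrium (D : CostDist) (phi t A1 A0 B1 B0 gammaMu r d1 d0 : ℝ) : Prop :=
  d1 ∈ Set.Icc (0 : ℝ) 1 ∧ d0 ∈ Set.Icc (0 : ℝ) 1 ∧
  (∀ r' : ℝ, V D phi t gammaMu d1 d0 r' ≤ V D phi t gammaMu d1 d0 r) ∧
  (∀ e1 ∈ Set.Icc (0 : ℝ) 1, ∀ e0 ∈ Set.Icc (0 : ℝ) 1,
    EUD D phi A1 A0 B1 B0 r e1 e0 ≤ EUD D phi A1 A0 B1 B0 r d1 d0)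

/-!
Write `Θ(t) = t + (k₀ - t) F k₀ + (k₁ - t) (1 - F k₁)`. Log-concavity of `f` makes the virtual
cost `k + F k / f k` strictly increasing, so `k₀(t)`, its inverse, is a differentiable function of
`t`; symmetry of `f` about `m` gives `k₁(t) = 2m - k₀(2m - t)`. Hence `Θ(t) = t - P(t) + P(2m - t)`
with `P(t) = (t - k₀(t)) F(k₀(t))`, and by the envelope theorem `P' = F ∘ k₀`. So
`Θ'(t) = F(k₁(t)) - F(k₀(t)) > 0` and `Θ(m) = m`, whence `m ≤ Θ(t) ↔ m ≤ t`.

For the payoffs: not complying pays more at `r₀*` and complying pays more at `r₁*`, so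
`V(r₀*) ≤ V(r₁*)` exactly when complying at `r₁*` beats not complying at `r₀*`, i.e. `m ≤ Θ(t)`.
-/

open Filter Set Topology Real

namespace CostDist

variable (D : CostDist)

lemma strictMono_F : StrictMono D.F :=
  strictMono_of_hasDerivAt_pos D.deriv_eq D.f_pos

lemma F_pos (x : ℝ) : 0 < D.F x := by
  have h : 0 ≤ D.F (x - 1) :=
    le_of_tendsto D.tendsto_bot
      (eventually_atBot.2 ⟨x - 1, fun _ hy => D.strictMono_F.monotone hy⟩)
  exact h.trans_lt (D.strictMono_F (by linarith))

lemma F_lt_one (x : ℝ) : D.F x < 1 := by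
  have h : D.F (x + 1) ≤ 1 :=
    ge_of_tendsto D.tendsto_top
      (eventually_atTop.2 ⟨x + 1, fun _ hy => D.strictMono_F.monotone hy⟩)
  exact (D.strictMono_F (by linarith)).trans_le h

/-- Tangent-line bound for the concave function `log ∘ f`, to the left of the tangency point. -/
lemma f_le_mul_exp_of_le {y k : ℝ} (hyk : y ≤ k) :
    D.f y ≤ D.f k * exp (deriv D.f k / D.f k * (y - k)) := by
  rcases hyk.eq_or_lt with rfl | hlt
  · simp
  have hlog : HasDerivAt (fun z => log (D.f z)) (deriv D.f k / D.f k) k :=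
    (D.f_diff k).hasDerivAt.log (D.f_pos k).ne'
  have hslope := D.f_logConcave.le_slope_of_hasDerivAt (mem_univ y) (mem_univ k) hlt hlog
  rw [slope_def_field, le_div_iff₀ (sub_pos.2 hlt)] at hslope
  calc D.f y = exp (log (D.f y)) := (exp_log (D.f_pos y)).symm
    _ ≤ exp (log (D.f k) + deriv D.f k / D.f k * (y - k)) := exp_le_exp.2 (by linarith)
    _ = D.f k * exp (deriv D.f k / D.f k * (y - k)) := by rw [exp_add, exp_log (D.f_pos k)]

lemma F_mul_deriv_f_le_sq (k : ℝ) : D.F k * deriv D.f k ≤ D.f k ^ 2 := by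
  rcases le_or_gt (deriv D.f k) 0 with hneg | hpos
  · nlinarith [D.F_pos k, D.f_pos k]
  set c := deriv D.f k / D.f k
  have hc : 0 < c := div_pos hpos (D.f_pos k)
  -- `g` increases on `(-∞, k]`, where `f` lies below `f k * exp (c (y - k))`, and vanishes at
  -- `-∞`; so `g k ≥ 0`, i.e. `c F k ≤ f k`
  set g : ℝ → ℝ := fun y => D.f k * exp (c * (y - k)) - c * D.F y with hg_def
  have hg : ∀ y, HasDerivAt g (c * (D.f k * exp (c * (y - k)) - D.f y)) y := by
    intro y
    have hexp := (((hasDerivAt_id y).sub_const k).const_mul c).exp.const_mul (D.f k)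
    exact (hexp.sub ((D.deriv_eq y).const_mul c)).congr_deriv (by simp only [id, mul_one]; ring)
  have hmono : MonotoneOn g (Iic k) := by
    refine monotoneOn_of_hasDerivWithinAt_nonneg (convex_Iic k)
      (fun y _ => (hg y).continuousAt.continuousWithinAt) (fun y _ => (hg y).hasDerivWithinAt)
      fun y hy => mul_nonneg hc.le (sub_nonneg.2 (D.f_le_mul_exp_of_le ?_))
    rw [interior_Iic] at hy
    exact le_of_lt hy
  have hlim : Tendsto g atBot (𝓝 0) := by
    have hexp : Tendsto (fun y => exp (c * (y - k))) atBot (𝓝 0) :=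
      tendsto_exp_atBot.comp ((tendsto_atBot_add_const_right _ (-k) tendsto_id).const_mul_atBot hc)
    simpa using (hexp.const_mul (D.f k)).sub (D.tendsto_bot.const_mul c)
  have hgk : 0 ≤ g k :=
    le_of_tendsto hlim (eventually_atBot.2 ⟨k, fun y hy => hmono hy self_mem_Iic hy⟩)
  simp only [hg_def, sub_self, mul_zero, exp_zero, mul_one] at hgk
  rw [← div_mul_cancel₀ (deriv D.f k) (D.f_pos k).ne']
  nlinarith [mul_nonneg (D.f_pos k).le hgk]

lemma hasDerivAt_F_div_f (k : ℝ) :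
    HasDerivAt (fun x => D.F x / D.f x)
      ((D.f k * D.f k - D.F k * deriv D.f k) / D.f k ^ 2) k :=
  (D.deriv_eq k).div (D.f_diff k).hasDerivAt (D.f_pos k).ne'

lemma deriv_F_div_f_nonneg (k : ℝ) :
    0 ≤ (D.f k * D.f k - D.F k * deriv D.f k) / D.f k ^ 2 :=
  div_nonneg (by nlinarith [D.F_mul_deriv_f_le_sq k]) (sq_nonneg _)

lemma monotone_F_div_f : Monotone fun x => D.F x / D.f x :=
  monotone_of_hasDerivAt_nonneg D.hasDerivAt_F_div_f D.deriv_F_div_f_nonneg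

noncomputable def virtualCost (k : ℝ) : ℝ := k + D.F k / D.f k

lemma hasDerivAt_virtualCost (k : ℝ) :
    HasDerivAt D.virtualCost (1 + (D.f k * D.f k - D.F k * deriv D.f k) / D.f k ^ 2) k :=
  (hasDerivAt_id k).add (D.hasDerivAt_F_div_f k)

lemma deriv_virtualCost_pos (k : ℝ) :
    0 < 1 + (D.f k * D.f k - D.F k * deriv D.f k) / D.f k ^ 2 := by
  linarith [D.deriv_F_div_f_nonneg k]

lemma strictMono_virtualCost : StrictMono D.virtualCost :=
  strictMono_of_hasDerivAt_pos D.hasDerivAt_virtualCost D.deriv_virtualCost_pos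

lemma surjective_virtualCost : Function.Surjective D.virtualCost := by
  have hcont : Continuous D.virtualCost :=
    continuous_iff_continuousAt.2 fun k => (D.hasDerivAt_virtualCost k).continuousAt
  refine hcont.surjective ?_ ?_
  · exact tendsto_atTop_mono (fun k => le_add_of_nonneg_right (div_pos (D.F_pos k) (D.f_pos k)).le)
      tendsto_id
  · refine tendsto_atBot_mono' atBot ?_ (tendsto_atBot_add_const_right atBot (D.F 0 / D.f 0) tendsto_id)
    filter_upwards [eventually_le_atBot 0] with k hk
    exact add_le_add_right (D.monotone_F_div_f hk) k

noncomputable def virtualCostOrderIso : ℝ ≃o ℝ :=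
  D.strictMono_virtualCost.orderIsoOfSurjective _ D.surjective_virtualCost

/-- The paper's `k₀(t)`, the unique solution of `k = t - F k / f k`. -/
noncomputable def k₀ (t : ℝ) : ℝ := D.virtualCostOrderIso.symm t

lemma virtualCost_k₀ (t : ℝ) : D.virtualCost (D.k₀ t) = t :=
  D.virtualCostOrderIso.apply_symm_apply t

lemma k₀_eq_of_eq_sub {t k : ℝ} (hk : k = t - D.F k / D.f k) : D.k₀ t = k := by
  rw [← D.virtualCostOrderIso.symm_apply_apply k]
  congr 1
  change t = k + D.F k / D.f k
  linarith

lemma differentiableAt_k₀ (t : ℝ) : DifferentiableAt ℝ D.k₀ t :=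
  ((D.hasDerivAt_virtualCost _).of_local_left_inverse
    D.virtualCostOrderIso.symm.continuous.continuousAt (D.deriv_virtualCost_pos _).ne'
    (Eventually.of_forall D.virtualCost_k₀)).differentiableAt

/-- A voter's payoff `EU₀` from not complying at the low reward `r₀*`. -/
noncomputable def lowPayoff (t : ℝ) : ℝ := (t - D.k₀ t) * D.F (D.k₀ t)

lemma hasDerivAt_lowPayoff (t : ℝ) : HasDerivAt D.lowPayoff (D.F (D.k₀ t)) t := by
  have hk := (D.differentiableAt_k₀ t).hasDerivAt
  have hcrit : (t - D.k₀ t) * D.f (D.k₀ t) = D.F (D.k₀ t) := by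
    have h : t - D.k₀ t = D.F (D.k₀ t) / D.f (D.k₀ t) := by
      have h := D.virtualCost_k₀ t
      unfold virtualCost at h
      linarith
    rw [h, div_mul_cancel₀ _ (D.f_pos _).ne']
  exact (((hasDerivAt_id t).sub hk).mul ((D.deriv_eq _).comp t hk)).congr_deriv
    (by
      simp only [Pi.sub_apply, id, Function.comp_apply]
      linear_combination deriv D.k₀ t * hcrit)

lemma f_two_mul_sub {m : ℝ} (hsym : ∀ x, D.f (m + x) = D.f (m - x)) (x : ℝ) :
    D.f (2 * m - x) = D.f x := by
  have h := hsym (x - m)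
  rw [add_sub_cancel, show m - (x - m) = 2 * m - x by ring] at h
  exact h.symm

lemma F_add_F_two_mul_sub {m : ℝ} (hsym : ∀ x, D.f (m + x) = D.f (m - x)) (x : ℝ) :
    D.F x + D.F (2 * m - x) = 1 := by
  set g : ℝ → ℝ := fun y => D.F y + D.F (2 * m - y)
  have hg : ∀ y, HasDerivAt g 0 y := fun y => by
    have h := (D.deriv_eq y).add ((D.deriv_eq (2 * m - y)).comp y ((hasDerivAt_id y).const_sub _))
    rwa [D.f_two_mul_sub hsym, mul_neg_one, add_neg_cancel] at h
  have hconst : ∀ y, g y = g x := fun y =>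
    is_const_of_deriv_eq_zero (fun z => (hg z).differentiableAt) (fun z => (hg z).deriv) y x
  have hlim : Tendsto g atTop (𝓝 (1 + 0)) :=
    D.tendsto_top.add (D.tendsto_bot.comp (tendsto_atBot_add_const_left _ _ tendsto_neg_atTop_atBot))
  simpa using tendsto_nhds_unique (tendsto_const_nhds.congr fun y => (hconst y).symm) hlim

lemma k₀_two_mul_sub_lt {m : ℝ} (hsym : ∀ x, D.f (m + x) = D.f (m - x)) (τ : ℝ) :
    D.k₀ (2 * m - τ) < 2 * m - D.k₀ τ := by
  rw [← D.strictMono_virtualCost.lt_iff_lt, D.virtualCost_k₀, virtualCost, D.f_two_mul_sub hsym,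
    show D.F (2 * m - D.k₀ τ) = 1 - D.F (D.k₀ τ) by linarith [D.F_add_F_two_mul_sub hsym (D.k₀ τ)]]
  have h := D.virtualCost_k₀ τ
  unfold virtualCost at h
  have := div_pos (D.F_pos (D.k₀ τ)) (D.f_pos (D.k₀ τ))
  have := div_pos (sub_pos.2 (D.F_lt_one (D.k₀ τ))) (D.f_pos (D.k₀ τ))
  linarith

/-- The paper's `Θ(t)`, with the cutoffs `k₀(t)`, `k₁(t)` passed as arguments. -/
def threshold (t k₀ k₁ : ℝ) : ℝ :=
  k₀ * D.F k₀ + k₁ * (1 - D.F k₁) + t * (D.F k₁ - D.F k₀)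

noncomputable def symmetricThreshold (m t : ℝ) : ℝ :=
  t - D.lowPayoff t + D.lowPayoff (2 * m - t)

lemma threshold_eq_symmetricThreshold {m t k0 k1 : ℝ}
    (hsym : ∀ x, D.f (m + x) = D.f (m - x))
    (hk1 : k1 = t + (1 - D.F k1) / D.f k1) (hk0 : k0 = t - D.F k0 / D.f k0) :
    D.threshold t k0 k1 = D.symmetricThreshold m t := by
  have hF1 : D.F (2 * m - k1) = 1 - D.F k1 := by linarith [D.F_add_F_two_mul_sub hsym k1]
  have hk1' : D.k₀ (2 * m - t) = 2 * m - k1 := by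
    refine D.k₀_eq_of_eq_sub ?_
    rw [hF1, D.f_two_mul_sub hsym]
    linarith
  rw [symmetricThreshold, lowPayoff, lowPayoff, D.k₀_eq_of_eq_sub hk0, hk1', hF1, threshold]
  ring

lemma strictMono_symmetricThreshold {m : ℝ} (hsym : ∀ x, D.f (m + x) = D.f (m - x)) :
    StrictMono (D.symmetricThreshold m) := by
  refine strictMono_of_hasDerivAt_pos (fun t => (((hasDerivAt_id t).sub (D.hasDerivAt_lowPayoff t)).add
    ((D.hasDerivAt_lowPayoff _).comp t ((hasDerivAt_id t).const_sub _)))) fun t => ?_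
  have h := D.strictMono_F (D.k₀_two_mul_sub_lt hsym t)
  linarith [D.F_add_F_two_mul_sub hsym (D.k₀ t)]

lemma symmetricThreshold_self (m : ℝ) : D.symmetricThreshold m m = m := by
  rw [symmetricThreshold, two_mul, add_sub_cancel_right, sub_add_cancel]

lemma le_symmetricThreshold_iff {m t : ℝ} (hsym : ∀ x, D.f (m + x) = D.f (m - x)) :
    m ≤ D.symmetricThreshold m t ↔ m ≤ t := by
  simpa only [symmetricThreshold_self] using (D.strictMono_symmetricThreshold hsym).le_iff_le (a := m)

end CostDist

section Voter

variable (D : CostDist) {phi t γ d1 d0 : ℝ}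

lemma V_div_rho (hρ : rho d1 d0 phi ≠ 0) (k : ℝ) :
    V D phi t γ d1 d0 (k / rho d1 d0 phi) =
      max (-γ + k * (1 - D.F k) + t * D.F k) ((t - k) * D.F k) := by
  rw [V, EU1, EU0, div_mul_cancel₀ k hρ]
  ring_nf

lemma V_le_V_iff_le_threshold (hρ : rho d1 d0 phi ≠ 0) {k0 k1 : ℝ} (hk0 : k0 < t) (hk1 : t < k1) :
    V D phi t γ d1 d0 (k0 / rho d1 d0 phi) ≤ V D phi t γ d1 d0 (k1 / rho d1 d0 phi) ↔
      γ ≤ D.threshold t k0 k1 := by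
  rw [V_div_rho D hρ, V_div_rho D hρ, CostDist.threshold]
  have noncomply : (t - k1) * D.F k1 < (t - k0) * D.F k0 := by
    nlinarith [mul_pos (sub_pos.2 hk0) (D.F_pos k0), mul_pos (sub_pos.2 hk1) (D.F_pos k1)]
  have comply : -γ + k0 * (1 - D.F k0) + t * D.F k0 < -γ + k1 * (1 - D.F k1) + t * D.F k1 := by
    nlinarith [mul_pos (sub_pos.2 hk0) (sub_pos.2 (D.F_lt_one k0)),
      mul_pos (sub_pos.2 hk1) (sub_pos.2 (D.F_lt_one k1))]
  constructor
  · intro h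
    rcases le_max_iff.1 ((le_max_right _ _).trans h) with h | h <;> linarith
  · intro h
    exact (max_le comply.le (by linarith)).trans (le_max_left _ _)

end Voter

theorem prop9_general (D : CostDist) (m t k0v k1v : ℝ)
    (hsym : ∀ x : ℝ, D.f (m + x) = D.f (m - x))
    (hk1 : k1v = t + (1 - D.F k1v) / D.f k1v)
    (hk0 : k0v = t - D.F k0v / D.f k0v) :
    (m ≤ k0v * D.F k0v + k1v * (1 - D.F k1v) + t * (D.F k1v - D.F k0v) ↔ m ≤ t) ∧
    (∀ phi ∈ Set.Ioc (1 / 2 : ℝ) 1, ∀ d1 ∈ Set.Icc (0 : ℝ) 1, ∀ d0 ∈ Set.Icc (0 : ℝ) 1,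
      rho d1 d0 phi ≠ 0 →
        (V D phi t m d1 d0 (k0v / rho d1 d0 phi) ≤
            V D phi t m d1 d0 (k1v / rho d1 d0 phi) ↔ m ≤ t)) := by
  have hΘ : m ≤ D.threshold t k0v k1v ↔ m ≤ t := by
    rw [D.threshold_eq_symmetricThreshold hsym hk1 hk0]
    exact D.le_symmetricThreshold_iff hsym
  have hk0_lt : k0v < t := by linarith [div_pos (D.F_pos k0v) (D.f_pos k0v)]
  have hlt_k1 : t < k1v := by linarith [div_pos (sub_pos.2 (D.F_lt_one k1v)) (D.f_pos k1v)]
  exact ⟨hΘ, fun phi _ d1 _ d0 _ hρ => (V_le_V_iff_le_threshold D hρ hk0_lt hlt_k1).trans hΘ⟩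

/-- **Proposition 9.** If the density is symmetric about its mean `m` (so the median cost
is `m`), then the median voter weakly prefers the high reward `r₁*` to the low reward
`r₀*` — equivalently `m ≤ Θ(t)` — if and only if `m ≤ t`. -/
theorem prop9 (D : CostDist) (m t k0v k1v : ℝ) (ht : 0 ≤ t)
    (hsym : ∀ x : ℝ, D.f (m + x) = D.f (m - x))
    (hk1 : k1v = t + (1 - D.F k1v) / D.f k1v)
    (hk0 : k0v = t - D.F k0v / D.f k0v) :
    (m ≤ k0v * D.F k0v + k1v * (1 - D.F k1v) + t * (D.F k1v - D.F k0v) ↔ m ≤ t) ∧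
    (∀ phi ∈ Set.Ioc (1 / 2 : ℝ) 1, ∀ d1 ∈ Set.Icc (0 : ℝ) 1, ∀ d0 ∈ Set.Icc (0 : ℝ) 1,
      rho d1 d0 phi ≠ 0 →
        (V D phi t m d1 d0 (k0v / rho d1 d0 phi) ≤
            V D phi t m d1 d0 (k1v / rho d1 d0 phi) ↔ m ≤ t)) :=
  prop9_general D m t k0v k1v hsym hk1 hk0
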